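/- Let $T \geq 1$, let $K_1, \ldots, K_T$ be $H \times H$ real positive semidefinite matrices, and let $\beta, \gamma > 0$. Then for every real $H \times D$ matrix $L$ and every collection of $D \times D$ real positive semidefinite matrices $M_1, \ldots, M_T$ satisfying $L M_t L^{\top} = K_t$ for all $t = 1, \ldots, T$, one has $2\sqrt{\beta\gamma}\,\mathrm{tr}\big((\sum_{t=1}^T K_t)^{1/2}\big) \leq \gamma \sum_{t=1}^T \mathrm{tr}(M_t) + \beta \|L\|_F^2$. -/

import Mathlib

open Matrix

/-- The (unique) positive semidefinite square root of a real positive semidefinite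
matrix (junk value `0` if the matrix is not positive semidefinite). -/
noncomputable def psdSqrt {n : ℕ} (A : Matrix (Fin n) (Fin n) ℝ) : Matrix (Fin n) (Fin n) ℝ :=
  letI := Classical.propDecidable A.PosSemidef
  if h : A.PosSemidef then
    h.1.eigenvectorUnitary.1 * diagonal ((↑) ∘ (√·) ∘ h.1.eigenvalues) *
      (star h.1.eigenvectorUnitary : Matrix (Fin n) (Fin n) ℝ)
  else 0

namespace Matrix.PosSemidef

variable {n : Type*} [Fintype n] [DecidableEq n]

noncomputable def sqrt {A : Matrix n n ℝ} (hA : A.PosSemidef) : Matrix n n ℝ :=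
  hA.1.eigenvectorUnitary.1 * diagonal ((↑) ∘ (√·) ∘ hA.1.eigenvalues) *
    (star hA.1.eigenvectorUnitary : Matrix n n ℝ)

lemma sqrt_mul_self {A : Matrix n n ℝ} (hA : A.PosSemidef) : hA.sqrt * hA.sqrt = A := by
  have hU : (star hA.1.eigenvectorUnitary : Matrix n n ℝ) * hA.1.eigenvectorUnitary.1 = 1 :=
    Unitary.coe_star_mul_self _
  refine Eq.trans ?_ hA.1.spectral_theorem.symm
  rw [Unitary.conjStarAlgAut_apply]
  simp only [sqrt, Matrix.mul_assoc]
  rw [← Matrix.mul_assoc (star _ : Matrix n n ℝ), hU, Matrix.one_mul,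
    ← Matrix.mul_assoc (diagonal _), diagonal_mul_diagonal]
  congr 3
  funext i
  simp [Real.mul_self_sqrt (hA.eigenvalues_nonneg i)]

lemma posSemidef_sqrt {A : Matrix n n ℝ} (hA : A.PosSemidef) : hA.sqrt.PosSemidef := by
  unfold sqrt
  rw [Matrix.star_eq_conjTranspose]
  exact PosSemidef.mul_mul_conjTranspose_same
    (posSemidef_diagonal_iff.mpr fun i => by simp [Real.sqrt_nonneg]) _

end Matrix.PosSemidef

section Aux

variable {n m : Type*} [Fintype n] [Fintype m] [DecidableEq n] [DecidableEq m]

lemma psd_smul {A : Matrix n n ℝ} (hA : A.PosSemidef) {c : ℝ} (hc : 0 ≤ c) :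
    (c • A).PosSemidef := by
  have hherm : (c • A).IsHermitian := by
    rw [Matrix.IsHermitian, conjTranspose_smul, star_trivial, hA.1.eq]
  refine .of_dotProduct_mulVec_nonneg hherm fun x => ?_
  rw [smul_mulVec, dotProduct_smul, smul_eq_mul]
  exact mul_nonneg hc (hA.dotProduct_mulVec_nonneg x)

lemma pd_smul {A : Matrix n n ℝ} (hA : A.PosDef) {c : ℝ} (hc : 0 < c) :
    (c • A).PosDef := by
  have hherm : (c • A).IsHermitian := by
    rw [Matrix.IsHermitian, conjTranspose_smul, star_trivial, hA.1.eq]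
  refine .of_dotProduct_mulVec_pos hherm fun x hx => ?_
  rw [smul_mulVec, dotProduct_smul, smul_eq_mul]
  exact mul_pos hc (hA.dotProduct_mulVec_pos hx)

lemma trace_nonneg_of_psd {A : Matrix n n ℝ} (hA : A.PosSemidef) : 0 ≤ A.trace := by
  rw [Matrix.trace]
  refine Finset.sum_nonneg fun i _ => ?_
  have := hA.dotProduct_mulVec_nonneg (Pi.single i 1)
  simpa [Matrix.diag, dotProduct, mulVec, Pi.single_apply, Finset.sum_ite_eq,
    Finset.sum_ite_eq'] using this

lemma trace_mul_nonneg {A B : Matrix n n ℝ} (hA : A.PosSemidef) (hB : B.PosSemidef) :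
    0 ≤ (A * B).trace := by
  have h1 : A * B = A * (hB.sqrt * hB.sqrt) := by rw [hB.sqrt_mul_self]
  have h2 : (A * (hB.sqrt * hB.sqrt)).trace = (hB.sqrt * A * hB.sqrt).trace := by
    rw [← Matrix.mul_assoc, Matrix.trace_mul_cycle]
  have hpsd : (hB.sqrt * A * hB.sqrt).PosSemidef := by
    have := hA.conjTranspose_mul_mul_same hB.sqrt
    rwa [hB.posSemidef_sqrt.1.eq] at this
  rw [h1, h2]
  exact trace_nonneg_of_psd hpsd

/-- Core trace inequality: `2 tr √S ≤ tr X + tr (X⁻¹ S)` for posdef `X`, psd `S`. -/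
lemma two_trace_sqrt_le {S X : Matrix n n ℝ} (hS : S.PosSemidef) (hX : X.PosDef) :
    2 * hS.sqrt.trace ≤ X.trace + (X⁻¹ * S).trace := by
  set R := hS.sqrt with hR
  have hRs : R.PosSemidef := hS.posSemidef_sqrt
  have hXinv : X⁻¹.PosDef := hX.inv
  have hherm : (X - R)ᴴ = X - R := by
    rw [conjTranspose_sub, hX.1.eq, hRs.1.eq]
  have hpsd : ((X - R) * X⁻¹ * (X - R)).PosSemidef := by
    have := hXinv.posSemidef.conjTranspose_mul_mul_same (X - R)
    rwa [hherm] at this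
  have hXdet : IsUnit X.det := isUnit_iff_isUnit_det X |>.mp hX.isUnit
  have hXX : X * X⁻¹ = 1 := Matrix.mul_nonsing_inv X hXdet
  have hXX' : X⁻¹ * X = 1 := Matrix.nonsing_inv_mul X hXdet
  have hexp : (X - R) * X⁻¹ * (X - R) = X - R - R + R * X⁻¹ * R := by
    have h1 : (X - R) * X⁻¹ = 1 - R * X⁻¹ := by
      rw [Matrix.sub_mul, hXX]
    rw [h1, Matrix.sub_mul, Matrix.one_mul, Matrix.mul_sub, Matrix.mul_assoc, hXX']
    noncomm_ring
  have htr : 0 ≤ (X - R - R + R * X⁻¹ * R).trace := hexp ▸ trace_nonneg_of_psd hpsd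
  have hRXR : (R * X⁻¹ * R).trace = (X⁻¹ * S).trace := by
    have hRR : R * R = S := hS.sqrt_mul_self
    rw [Matrix.mul_assoc, Matrix.trace_mul_comm, Matrix.mul_assoc, hRR]
  rw [trace_add, trace_sub, trace_sub, hRXR] at htr
  linarith

end Aux

/-- Lower-bound direction of Proposition 1: for any factorization `K t = L * M t * Lᵀ`
with `M t` positive semidefinite,
`2 √(βγ) tr((∑ t, K t)^{1/2}) ≤ γ ∑ t tr(M t) + β ‖L‖_F²`. -/
theorem stmt_0 {H D T : ℕ} (hT : 1 ≤ T)
    (K : Fin T → Matrix (Fin H) (Fin H) ℝ)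
    (hK : ∀ t, (K t).PosSemidef)
    (β γ : ℝ) (hβ : 0 < β) (hγ : 0 < γ)
    (L : Matrix (Fin H) (Fin D) ℝ)
    (M : Fin T → Matrix (Fin D) (Fin D) ℝ)
    (hM : ∀ t, (M t).PosSemidef)
    (hfact : ∀ t, L * M t * Lᵀ = K t) :
    2 * Real.sqrt (β * γ) * (psdSqrt (∑ t, K t)).trace ≤
      γ * ∑ t, (M t).trace + β * (L * Lᵀ).trace := by
  classical
  set S : Matrix (Fin H) (Fin H) ℝ := ∑ t, K t with hSdef
  set N : Matrix (Fin D) (Fin D) ℝ := ∑ t, M t with hNdef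
  have hS : S.PosSemidef := by
    rw [hSdef]
    induction (Finset.univ : Finset (Fin T)) using Finset.induction with
    | empty => simpa using Matrix.PosSemidef.zero
    | insert x s hx ih => rw [Finset.sum_insert hx]; exact (hK _).add ih
  have hN : N.PosSemidef := by
    rw [hNdef]
    induction (Finset.univ : Finset (Fin T)) using Finset.induction with
    | empty => simpa using Matrix.PosSemidef.zero
    | insert x s hx ih => rw [Finset.sum_insert hx]; exact (hM _).add ih
  have hSN : S = L * N * Lᵀ := by
    rw [hSdef, hNdef]
    simp only [Matrix.mul_sum, Matrix.sum_mul]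
    exact Finset.sum_congr rfl fun t _ => (hfact t).symm
  have hpsdSqrt : psdSqrt S = hS.sqrt := by
    rw [psdSqrt]
    exact dif_pos hS
  have hNtr : 0 ≤ N.trace := trace_nonneg_of_psd hN
  -- main ε-inequality
  have key : ∀ ε : ℝ, 0 < ε →
      2 * Real.sqrt (β * γ) * (psdSqrt S).trace ≤
        γ * N.trace + β * (L * Lᵀ).trace + β * H * ε := by
    intro ε hε
    set c : ℝ := Real.sqrt (β / γ) with hc
    have hcpos : 0 < c := Real.sqrt_pos.mpr (div_pos hβ hγ)
    set Y : Matrix (Fin H) (Fin H) ℝ := L * Lᵀ + ε • 1 with hY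
    have hYpd : Y.PosDef := by
      have h1 : (L * Lᵀ).PosSemidef := Matrix.posSemidef_self_mul_conjTranspose L
      have h2 : (ε • (1 : Matrix (Fin H) (Fin H) ℝ)).PosDef :=
        pd_smul Matrix.PosDef.one hε
      exact Matrix.PosDef.posSemidef_add h1 h2
    set X : Matrix (Fin H) (Fin H) ℝ := c • Y with hX
    have hXpd : X.PosDef := pd_smul hYpd hcpos
    have hmain := two_trace_sqrt_le hS hXpd
    -- X⁻¹ = c⁻¹ • Y⁻¹
    have hXinv : X⁻¹ = c⁻¹ • Y⁻¹ := by
      apply Matrix.inv_eq_left_inv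
      rw [hX, Matrix.smul_mul, Matrix.mul_smul, smul_smul,
        Matrix.nonsing_inv_mul Y (isUnit_iff_isUnit_det Y |>.mp hYpd.isUnit),
        inv_mul_cancel₀ hcpos.ne']
      simp
    -- push-through identity
    set P : Matrix (Fin D) (Fin D) ℝ := Lᵀ * L + ε • 1 with hP
    have hPpd : P.PosDef := by
      have h1 : (Lᵀ * L).PosSemidef := by
        have := Matrix.posSemidef_conjTranspose_mul_self L
        simpa using this
      exact Matrix.PosDef.posSemidef_add h1 (pd_smul Matrix.PosDef.one hε)
    have hswap : P * Lᵀ = Lᵀ * Y := by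
      rw [hP, hY, Matrix.add_mul, Matrix.mul_add, Matrix.mul_assoc]
      simp [Matrix.smul_mul, Matrix.mul_smul]
    have hYu : IsUnit Y.det := isUnit_iff_isUnit_det Y |>.mp hYpd.isUnit
    have hPu : IsUnit P.det := isUnit_iff_isUnit_det P |>.mp hPpd.isUnit
    have hpush : Lᵀ * Y⁻¹ = P⁻¹ * Lᵀ := by
      have : P⁻¹ * (P * Lᵀ) * Y⁻¹ = P⁻¹ * (Lᵀ * Y) * Y⁻¹ := by rw [hswap]
      rw [← Matrix.mul_assoc, Matrix.nonsing_inv_mul P hPu, Matrix.one_mul,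
        Matrix.mul_assoc, Matrix.mul_assoc, Matrix.mul_nonsing_inv Y hYu,
        Matrix.mul_one] at this
      exact this
    -- tr(Y⁻¹ S) ≤ tr N
    have htrYS : (Y⁻¹ * S).trace ≤ N.trace := by
      have h1 : (Y⁻¹ * S).trace = (N * (P⁻¹ * (Lᵀ * L))).trace := by
        have e1 : Y⁻¹ * S = (Y⁻¹ * (L * N)) * Lᵀ := by
          rw [hSN]; simp only [Matrix.mul_assoc]
        have e2 : Lᵀ * (Y⁻¹ * (L * N)) = P⁻¹ * (Lᵀ * L) * N := by
          rw [← Matrix.mul_assoc, hpush]; simp only [Matrix.mul_assoc]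
        rw [e1, Matrix.trace_mul_comm, e2, Matrix.trace_mul_comm]
      have hIP : (1 : Matrix (Fin D) (Fin D) ℝ) - P⁻¹ * (Lᵀ * L) = ε • P⁻¹ := by
        have hinv : P⁻¹ * P = 1 := Matrix.nonsing_inv_mul P hPu
        calc (1 : Matrix (Fin D) (Fin D) ℝ) - P⁻¹ * (Lᵀ * L)
            = P⁻¹ * P - P⁻¹ * (Lᵀ * L) := by rw [hinv]
          _ = P⁻¹ * (P - Lᵀ * L) := (Matrix.mul_sub _ _ _).symm
          _ = P⁻¹ * (ε • 1) := by rw [hP, add_sub_cancel_left]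
          _ = ε • P⁻¹ := by rw [Matrix.mul_smul, Matrix.mul_one]
      have h2 : N.trace - (N * (P⁻¹ * (Lᵀ * L))).trace = (N * (ε • P⁻¹)).trace := by
        rw [← hIP, Matrix.mul_sub, Matrix.mul_one, trace_sub]
      have h3 : 0 ≤ (N * (ε • P⁻¹)).trace :=
        trace_mul_nonneg hN (psd_smul hPpd.inv.posSemidef hε.le)
      rw [h1]
      linarith
    -- compute trace of X
    have htrX : X.trace = c * ((L * Lᵀ).trace + ε * H) := by
      rw [hX, trace_smul, hY, trace_add, trace_smul, trace_one]
      simp [smul_eq_mul]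
    have htrXinvS : (X⁻¹ * S).trace = c⁻¹ * (Y⁻¹ * S).trace := by
      rw [hXinv, Matrix.smul_mul, trace_smul, smul_eq_mul]
    -- scalar facts
    have hsc : Real.sqrt (β * γ) * c = β := by
      rw [hc, ← Real.sqrt_mul (by positivity)]
      rw [show β * γ * (β / γ) = β ^ 2 by field_simp]
      exact Real.sqrt_sq hβ.le
    have hsc' : Real.sqrt (β * γ) * c⁻¹ = γ := by
      rw [hc, ← Real.sqrt_inv, ← Real.sqrt_mul (by positivity),
        show β * γ * (β / γ)⁻¹ = γ ^ 2 by field_simp]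
      exact Real.sqrt_sq hγ.le
    have hsqrtpos : 0 < Real.sqrt (β * γ) := Real.sqrt_pos.mpr (by positivity)
    -- assemble
    rw [hpsdSqrt]
    have step : 2 * hS.sqrt.trace ≤ c * ((L * Lᵀ).trace + ε * H) + c⁻¹ * N.trace := by
      calc 2 * hS.sqrt.trace ≤ X.trace + (X⁻¹ * S).trace := hmain
        _ = c * ((L * Lᵀ).trace + ε * H) + c⁻¹ * (Y⁻¹ * S).trace := by
            rw [htrX, htrXinvS]
        _ ≤ c * ((L * Lᵀ).trace + ε * H) + c⁻¹ * N.trace := by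
            have : c⁻¹ * (Y⁻¹ * S).trace ≤ c⁻¹ * N.trace :=
              mul_le_mul_of_nonneg_left htrYS (by positivity)
            linarith
    have := mul_le_mul_of_nonneg_left step hsqrtpos.le
    calc 2 * Real.sqrt (β * γ) * hS.sqrt.trace
        = Real.sqrt (β * γ) * (2 * hS.sqrt.trace) := by ring
      _ ≤ Real.sqrt (β * γ) * (c * ((L * Lᵀ).trace + ε * H) + c⁻¹ * N.trace) := this
      _ = (Real.sqrt (β * γ) * c) * ((L * Lᵀ).trace + ε * H) +
            (Real.sqrt (β * γ) * c⁻¹) * N.trace := by ring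
      _ = β * ((L * Lᵀ).trace + ε * H) + γ * N.trace := by rw [hsc, hsc']
      _ = γ * N.trace + β * (L * Lᵀ).trace + β * H * ε := by ring
  -- take ε → 0
  have hfin : 2 * Real.sqrt (β * γ) * (psdSqrt S).trace ≤
      γ * N.trace + β * (L * Lᵀ).trace := by
    refine le_of_forall_pos_le_add fun δ hδ => ?_
    have hε : (0 : ℝ) < δ / (β * (H + 1)) := by positivity
    have := key _ hε
    have hbd : β * H * (δ / (β * (H + 1))) ≤ δ := by
      rw [div_eq_mul_inv]
      have h1 : β * (H : ℝ) * (δ * (β * (H + 1))⁻¹) = δ * (H / (H + 1)) := by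
        field_simp
      rw [h1]
      have : (H : ℝ) / (H + 1) ≤ 1 := by
        rw [div_le_one (by positivity)]; linarith
      nlinarith
    linarith
  have hNtrace : N.trace = ∑ t, (M t).trace := by
    rw [hNdef]
    exact Matrix.trace_sum _ _
  rw [← hNtrace]
  exact hfin
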